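/- Let n ≥ 1 and let x_k, m_k : ℝ → ℝ (k = 1, …, n) be differentiable functions satisfying the ODE system ẋ_k(t) = Σ_{i=1}^n m_i(t) |x_k(t) − x_i(t)| and ṁ_k(t) = 2 Σ_{i=1}^n m_k(t) m_i(t) sgn(x_i(t) − x_k(t)) for all t, where sgn 0 = 0. Then the functions M(t) = Σ_{k=1}^n m_k(t) and M_+(t) = Σ_{k=1}^n m_k(t) x_k(t) are constant in t. -/

import Mathlib

/-!
Both quantities have derivatives that are double sums over pairs `(k, i)` whose `(k, i)` and
`(i, k)` terms cancel: for `M` because `sgn` is odd, and for `M₊` because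
`sgn (x_i - x_k) (x_k - x_i) = -|x_k - x_i|` cancels the contribution of `ẋ_k`.
-/

open Finset

theorem sum_sum_eq_zero_of_antisymm {ι M : Type*} [Fintype ι] [AddCommGroup M]
    [NoZeroSMulDivisors ℕ M] (f : ι → ι → M) (h : ∀ k i, f k i + f i k = 0) :
    ∑ k, ∑ i, f k i = 0 := by
  have hdouble : (2 : ℕ) • ∑ k, ∑ i, f k i = 0 := by
    calc (2 : ℕ) • ∑ k, ∑ i, f k i = ∑ k, ∑ i, f k i + ∑ k, ∑ i, f i k := by
          rw [two_nsmul, sum_comm (f := fun i k => f k i)]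
      _ = 0 := by simp only [← sum_add_distrib, h, sum_const_zero]
  exact (smul_eq_zero.mp hdouble).resolve_left two_ne_zero

theorem Real.sign_mul_self_eq_abs (a : ℝ) : Real.sign a * a = |a| := by
  rcases lt_trichotomy a 0 with h | rfl | h
  · rw [Real.sign_of_neg h, abs_of_neg h]; ring
  · simp
  · rw [Real.sign_of_pos h, abs_of_pos h]; ring

theorem Real.sign_sub_comm (a b : ℝ) : Real.sign (a - b) = -Real.sign (b - a) := by
  rw [← Real.sign_neg, neg_sub]

section PeakonFlow

variable {ι : Type*} [Fintype ι] {x m : ι → ℝ → ℝ} {t : ℝ}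

theorem hasDerivAt_sum_mass
    (hm : ∀ k, HasDerivAt (m k) (2 * ∑ i, m k t * m i t * Real.sign (x i t - x k t)) t) :
    HasDerivAt (fun t => ∑ k, m k t) 0 t := by
  refine (HasDerivAt.fun_sum (u := univ) fun k _ => hm k).congr_deriv ?_
  simp_rw [← mul_sum]
  rw [sum_sum_eq_zero_of_antisymm, mul_zero]
  intro k i
  rw [Real.sign_sub_comm (x k t)]
  ring

theorem hasDerivAt_sum_mass_mul_position
    (hx : ∀ k, HasDerivAt (x k) (∑ i, m i t * |x k t - x i t|) t)
    (hm : ∀ k, HasDerivAt (m k) (2 * ∑ i, m k t * m i t * Real.sign (x i t - x k t)) t) :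
    HasDerivAt (fun t => ∑ k, m k t * x k t) 0 t := by
  refine (HasDerivAt.fun_sum (u := univ) fun k _ => (hm k).mul (hx k)).congr_deriv ?_
  simp_rw [mul_sum, sum_mul, ← sum_add_distrib]
  refine sum_sum_eq_zero_of_antisymm _ fun k i => ?_
  have hsign := Real.sign_mul_self_eq_abs (x i t - x k t)
  rw [abs_sub_comm] at hsign
  rw [Real.sign_sub_comm (x k t), abs_sub_comm (x i t)]
  linear_combination (-2 * m k t * m i t) * hsign

end PeakonFlow

theorem eq_of_hasDerivAt_zero {f : ℝ → ℝ} (hf : ∀ t, HasDerivAt f 0 t) (s t : ℝ) : f s = f t :=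
  is_const_of_deriv_eq_zero (fun u => (hf u).differentiableAt) (fun u => (hf u).deriv) s t

theorem stmt0 (n : ℕ) (x m : Fin n → ℝ → ℝ)
    (hx : ∀ (k : Fin n) (t : ℝ),
      HasDerivAt (x k) (∑ i, m i t * |x k t - x i t|) t)
    (hm : ∀ (k : Fin n) (t : ℝ),
      HasDerivAt (m k) (2 * ∑ i, m k t * m i t * Real.sign (x i t - x k t)) t) :
    (∀ s t : ℝ, ∑ k, m k s = ∑ k, m k t) ∧
    (∀ s t : ℝ, ∑ k, m k s * x k s = ∑ k, m k t * x k t) :=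
  ⟨eq_of_hasDerivAt_zero fun t => hasDerivAt_sum_mass (hm · t),
    eq_of_hasDerivAt_zero fun t => hasDerivAt_sum_mass_mul_position (hx · t) (hm · t)⟩
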